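/- arXiv:0804.0230 — 2 statements merged into one kernel-verified Lean document; each statement's English description precedes it below -/
import Mathlib

section
/- If L is a proper selfdual Lagrangian on X × X* and φ is a convex continuous function on X, then M(x,p) = inf{L(x, p − r) + φ(x) + φ*(r) : r ∈ X*} is also a selfdual Lagrangian on X × X*. -/
/-!
`M* ≤ M` is Fenchel–Young: selfduality gives `L(x,s) + L(y,t) ≥ ⟨s,y⟩ + ⟨t,x⟩`, and
`φ(x) + φ*(r) ≥ ⟨r,x⟩`.

For `M ≤ M*`, substituting `q = s + r` in the supremum defining `M*(p,x)` gives
`M*(p,x) ≥ φ**(x) + (L + φ ∘ fst)*(p,x) ≥ φ(x) + (L + φ ∘ fst)*(p,x)`, so it remains to find `r`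
with `L(x, p - r) + φ*(r) ≤ α` whenever `(L + φ ∘ fst)*(p,x) ≤ α`. The Hahn–Banach sandwich theorem
puts a continuous affine function between the concave `(y,s) ↦ ⟨p,y⟩ + ⟨s,x⟩ - φ(y) - α` and the
convex `L`; by reflexivity it has the form `(y,s) ↦ ⟨r,y⟩ + ⟨s,v⟩ + c`. The lower bound forces
`v = x` and gives `φ*(p - r) ≤ c + α`, while the upper bound and selfduality give `L(x,r) ≤ -c`.
-/

open NormedSpace

/-- Legendre transform of a Lagrangian in both variables. -/
noncomputable def LagConj {X : Type*} [NormedAddCommGroup X] [NormedSpace ℝ X]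
    (L : X × StrongDual ℝ X → EReal) (p : StrongDual ℝ X) (u : X) : EReal :=
  ⨆ yq : X × StrongDual ℝ X, (((p yq.1) + (yq.2 u) : ℝ) : EReal) - L yq

/-- Legendre conjugate of a function `φ : X → ℝ` on the dual. -/
noncomputable def FnConj {X : Type*} [NormedAddCommGroup X] [NormedSpace ℝ X]
    (φ : X → ℝ) (r : StrongDual ℝ X) : EReal :=
  ⨆ x : X, ((r x - φ x : ℝ) : EReal)

open Set

namespace EReal

lemma coe_sub_le_coe_iff {a c : ℝ} {A : EReal} :
    (a : EReal) - A ≤ c ↔ ((a - c : ℝ) : EReal) ≤ A := by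
  induction A with
  | bot => simp [-coe_sub]
  | top => simp
  | coe A => norm_cast; constructor <;> intro <;> linarith

lemma coe_sub_add_coe_sub (a b : ℝ) {A B : EReal} (hA : A ≠ ⊥) (hB : B ≠ ⊥) :
    ((a : EReal) - A) + ((b : EReal) - B) = ((a + b : ℝ) : EReal) - (A + B) := by
  induction A with
  | bot => exact absurd rfl hA
  | top => simp [top_add_of_ne_bot hB]
  | coe A =>
    induction B with
    | bot => exact absurd rfl hB
    | top => simp
    | coe B => norm_cast; ring

lemma le_iInf_add_iInf {ι κ : Sort*} [Nonempty ι] [Nonempty κ] {f : ι → EReal} {g : κ → EReal}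
    {c : EReal} (hf : ⨅ i, f i ≠ ⊥) (hg : ⨅ j, g j ≠ ⊥) (h : ∀ i j, c ≤ f i + g j) :
    c ≤ (⨅ i, f i) + ⨅ j, g j := by
  refine le_add_of_forall_gt (Or.inl hf) (Or.inr hg) fun a ha b hb => ?_
  obtain ⟨i, hi⟩ := iInf_lt_iff.1 ha
  obtain ⟨j, hj⟩ := iInf_lt_iff.1 hb
  exact (h i j).trans (add_le_add hi.le hj.le)

lemma iSup_add_iSup_le {ι κ : Sort*} {f : ι → EReal} {g : κ → EReal} {c : EReal}
    (h : ∀ i j, f i + g j ≤ c) : (⨆ i, f i) + (⨆ j, g j) ≤ c := by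
  refine add_le_of_forall_lt fun a ha b hb => ?_
  obtain ⟨i, hi⟩ := lt_iSup_iff.1 ha
  obtain ⟨j, hj⟩ := lt_iSup_iff.1 hb
  exact (add_le_add hi.le hj.le).trans (h i j)

end EReal

section Sandwich

variable {E : Type*} [TopologicalSpace E] [AddCommGroup E] [Module ℝ E]
  [IsTopologicalAddGroup E] [ContinuousSMul ℝ E]

theorem exists_continuousAffine_between {f : E → EReal} {g : E → ℝ}
    (hf : Convex ℝ {w : E × ℝ | f w.1 ≤ w.2}) (hdom : ∃ z, f z ≠ ⊤)
    (hg : ConcaveOn ℝ univ g) (hgc : Continuous g) (hgf : ∀ z, (g z : EReal) ≤ f z) :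
    ∃ (ℓ : StrongDual ℝ E) (c : ℝ), ∀ z, g z ≤ ℓ z + c ∧ ((ℓ z + c : ℝ) : EReal) ≤ f z := by
  have hhypo : Convex ℝ {w : E × ℝ | w.2 < g w.1} := by
    simpa using hg.convex_strict_hypograph
  have hdisj : Disjoint {w : E × ℝ | w.2 < g w.1} {w : E × ℝ | f w.1 ≤ w.2} :=
    Set.disjoint_left.2 fun w hlt hle =>
      (hgf w.1).not_gt ((EReal.coe_lt_coe_iff.2 hlt).trans_le' hle)
  obtain ⟨F, u, hFlt, hFle⟩ := geometric_hahn_banach_open hhypo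
    (isOpen_lt continuous_snd (hgc.comp continuous_fst)) hf hdisj
  set β := F (0, 1)
  have hF : ∀ z t, F (z, t) = F (z, 0) + t * β := fun z t => by
    rw [show ((z, t) : E × ℝ) = (z, 0) + t • (0, 1) by simp, map_add, map_smul, smul_eq_mul]
  have hlow : ∀ z, ∀ t < g z, F (z, 0) + t * β < u := fun z t ht => hF z t ▸ hFlt (z, t) ht
  have hup : ∀ z (t : ℝ), f z ≤ t → u ≤ F (z, 0) + t * β := fun z t ht => hF z t ▸ hFle (z, t) ht
  obtain ⟨z₀, hz₀⟩ := hdom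
  obtain ⟨a, ha⟩ : ∃ a : ℝ, f z₀ = a :=
    ⟨_, (EReal.coe_toReal hz₀ (ne_bot_of_le_ne_bot (EReal.coe_ne_bot _) (hgf z₀))).symm⟩
  -- the hyperplane is not vertical: it separates `(z₀, g z₀ - 1)` from `(z₀, f z₀)`
  have hβ : 0 < β := by
    have h₁ := hlow z₀ (g z₀ - 1) (by linarith)
    have h₂ := hup z₀ a ha.le
    have h₃ : g z₀ ≤ a := EReal.coe_le_coe_iff.1 (ha ▸ hgf z₀)
    nlinarith
  refine ⟨-β⁻¹ • F.comp (.inl ℝ E ℝ), u / β, fun z => ?_⟩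
  have hval : (-β⁻¹ • F.comp (.inl ℝ E ℝ)) z + u / β = (u - F (z, 0)) / β := by
    simp only [smul_apply, ContinuousLinearMap.comp_apply,
      ContinuousLinearMap.inl_apply, smul_eq_mul]
    ring
  rw [hval]
  refine ⟨le_of_forall_lt fun t ht => (lt_div_iff₀ hβ).2 (by linarith [hlow z t ht]), ?_⟩
  cases hfz : f z using EReal.rec with
  | bot => exact absurd (hfz ▸ hgf z) (not_le.2 (EReal.bot_lt_coe _))
  | coe b => exact EReal.coe_le_coe_iff.2 ((div_le_iff₀ hβ).2 (by linarith [hup z b hfz.le]))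
  | top => exact le_top

end Sandwich

lemma eq_zero_of_forall_dual_le {V : Type*} [TopologicalSpace V] [AddCommGroup V] [Module ℝ V]
    [SeparatingDual ℝ V] {v : V} {K : ℝ} (h : ∀ s : StrongDual ℝ V, s v ≤ K) : v = 0 := by
  refine SeparatingDual.eq_zero_of_forall_dual_eq_zero (R := ℝ) fun s => ?_
  by_contra hs
  have := h (((K + 1) / s v) • s)
  rw [smul_apply, smul_eq_mul, div_mul_cancel₀ _ hs] at this
  linarith

lemma convex_setOf_coe_sub_le {E : Type*} [AddCommGroup E] [Module ℝ E] (f : E →ₗ[ℝ] ℝ)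
    (c : EReal) : Convex ℝ {w : E × ℝ | (f w.1 : EReal) - c ≤ w.2} := by
  cases c using EReal.rec with
  | bot => simpa using convex_empty
  | top => simpa using convex_univ
  | coe c =>
    have hset : {w : E × ℝ | (f w.1 : EReal) - c ≤ w.2} =
        {w | (f.comp (LinearMap.fst ℝ E ℝ) - LinearMap.snd ℝ E ℝ) w ≤ c} := by
      ext w
      simp only [mem_ofPred_eq, ← EReal.coe_sub, EReal.coe_le_coe_iff, LinearMap.sub_apply,
        LinearMap.comp_apply, LinearMap.fst_apply, LinearMap.snd_apply]
      constructor <;> intro <;> linarith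
    exact hset ▸ convex_halfSpace_le (LinearMap.isLinear _) c

section Lagrangian

variable {X : Type*} [NormedAddCommGroup X] [NormedSpace ℝ X]

lemma convex_epigraph_lagConj (L : X × StrongDual ℝ X → EReal) :
    Convex ℝ {w : (X × StrongDual ℝ X) × ℝ | LagConj L w.1.2 w.1.1 ≤ w.2} := by
  convert convex_iInter fun yq : X × StrongDual ℝ X => convex_setOf_coe_sub_le
    ((ContinuousLinearMap.apply ℝ ℝ yq.1).comp (.snd ℝ X _) + yq.2.comp (.fst ℝ X _)).toLinearMap
    (L yq) using 1
  ext w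
  simp [LagConj]

lemma le_fnConj (φ : X → ℝ) (r : StrongDual ℝ X) (y : X) :
    ((r y - φ y : ℝ) : EReal) ≤ FnConj φ r :=
  le_iSup (fun y => ((r y - φ y : ℝ) : EReal)) y

lemma le_iSup_sub_fnConj {φ : X → ℝ} (hφconv : ConvexOn ℝ univ φ)
    (hφlsc : LowerSemicontinuous φ) (x : X) :
    (φ x : EReal) ≤ ⨆ r : StrongDual ℝ X, (r x : EReal) - FnConj φ r := by
  refine EReal.ge_of_forall_gt_iff_ge.1 fun m hm => ?_
  obtain ⟨ℓ, c, hle, rfl⟩ := hφconv.exists_affine_le_of_lt (𝕜 := ℝ) (mem_univ x)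
    (EReal.coe_lt_coe_iff.1 hm) isClosed_univ (hφlsc.lowerSemicontinuousOn _)
  have hconj : FnConj φ ℓ ≤ ((-c : ℝ) : EReal) := by
    refine iSup_le fun y => EReal.coe_le_coe_iff.2 ?_
    have := hle ⟨y, mem_univ y⟩
    simp only [Pi.add_apply, domRestrict_apply, Function.comp_apply, RCLike.re_to_real,
      Function.const_apply] at this
    linarith
  calc (((ℓ x + c : ℝ)) : EReal) = (ℓ x : EReal) - ((-c : ℝ) : EReal) := by norm_cast; ring
    _ ≤ (ℓ x : EReal) - FnConj φ ℓ := EReal.sub_le_sub le_rfl hconj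
    _ ≤ ⨆ r : StrongDual ℝ X, (r x : EReal) - FnConj φ r :=
      le_iSup (fun r : StrongDual ℝ X => (r x : EReal) - FnConj φ r) ℓ

lemma lagConj_le_iff_forall_le_add {N : X × StrongDual ℝ X → EReal} (hN : ∀ z, N z ≠ ⊥)
    (x : X) (p : StrongDual ℝ X) :
    LagConj N p x ≤ N (x, p) ↔ ∀ y q, ((p y + q x : ℝ) : EReal) ≤ N (x, p) + N (y, q) := by
  simp only [LagConj, iSup_le_iff, Prod.forall]
  exact forall₂_congr fun y q => EReal.sub_le_iff_le_add (Or.inl (hN _)) (Or.inr (hN _))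

section SelfDual

variable {L : X × StrongDual ℝ X → EReal}

lemma apply_add_apply_le_of_lagConj_eq (hbot : ∀ z, L z ≠ ⊥)
    (hself : ∀ x p, LagConj L p x = L (x, p)) (x y : X) (s t : StrongDual ℝ X) :
    ((s y + t x : ℝ) : EReal) ≤ L (x, s) + L (y, t) :=
  (lagConj_le_iff_forall_le_add hbot x s).1 (hself x s).le y t

lemma apply_le_of_lagConj_eq (hbot : ∀ z, L z ≠ ⊥) (hself : ∀ x p, LagConj L p x = L (x, p))
    (x : X) (p : StrongDual ℝ X) : ((p x : ℝ) : EReal) ≤ L (x, p) := by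
  have h := apply_add_apply_le_of_lagConj_eq hbot hself x x p p
  cases hL : L (x, p) using EReal.rec with
  | bot => exact absurd hL (hbot _)
  | coe l =>
    rw [hL, ← EReal.coe_add, EReal.coe_le_coe_iff] at h
    exact EReal.coe_le_coe_iff.2 (by linarith)
  | top => exact le_top

end SelfDual

lemma exists_eq_apply_add_apply (hrefl : Function.Surjective (inclusionInDoubleDual ℝ X))
    (ℓ : StrongDual ℝ (X × StrongDual ℝ X)) :
    ∃ (r : StrongDual ℝ X) (v : X), ∀ y s, ℓ (y, s) = r y + s v := by
  obtain ⟨v, hv⟩ := hrefl (ℓ.comp (.inr ℝ X _))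
  refine ⟨ℓ.comp (.inl ℝ X _), v, fun y s => ?_⟩
  rw [← Prod.fst_add_snd (y, s), map_add]
  simpa [NormedSpace.dual_def] using (congrArg (fun f => ℓ (y, 0) + f s) hv).symm

lemma exists_add_fnConj_le_of_lagConj_add_le
    (hrefl : Function.Surjective (inclusionInDoubleDual ℝ X)) {L : X × StrongDual ℝ X → EReal}
    (hdom : ∃ z, L z ≠ ⊤) (hself : ∀ x p, LagConj L p x = L (x, p)) {φ : X → ℝ}
    (hφconv : ConvexOn ℝ univ φ) (hφcont : Continuous φ) {x : X} {p : StrongDual ℝ X} {α : ℝ}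
    (hα : LagConj (fun z => L z + φ z.1) p x ≤ α) :
    ∃ r, L (x, p - r) + FnConj φ r ≤ α := by
  have hgL : ∀ z, ((p z.1 + z.2 x - φ z.1 - α : ℝ) : EReal) ≤ L z := fun z => by
    have h := EReal.coe_sub_le_coe_iff.1 (iSup_le_iff.1 hα z)
    rwa [sub_right_comm, EReal.coe_sub,
      EReal.sub_le_iff_le_add (Or.inl (EReal.coe_ne_bot _)) (Or.inl (EReal.coe_ne_top _))]
  have hepi : Convex ℝ {w : (X × StrongDual ℝ X) × ℝ | L w.1 ≤ w.2} := by
    simpa only [hself] using convex_epigraph_lagConj L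
  have hg : ConcaveOn ℝ univ fun z : X × StrongDual ℝ X => p z.1 + z.2 x - φ z.1 - α := by
    have := ((((p.comp (.fst ℝ X _)) + (ContinuousLinearMap.apply ℝ ℝ x).comp
      (.snd ℝ X _)).toLinearMap.concaveOn convex_univ).sub
      (hφconv.comp_linearMap (LinearMap.fst ℝ X _))).add_const (-α)
    refine this.congr fun z _ => ?_
    simp [sub_eq_add_neg]
  have hgc : Continuous fun z : X × StrongDual ℝ X => p z.1 + z.2 x - φ z.1 - α := by
    fun_prop
  obtain ⟨ℓ, c, hℓ⟩ := exists_continuousAffine_between hepi hdom hg hgc hgL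
  obtain ⟨r, v, hrv⟩ := exists_eq_apply_add_apply hrefl ℓ
  have hlow : ∀ (y : X) (s : StrongDual ℝ X), p y + s x - φ y - α ≤ r y + s v + c :=
    fun y s => hrv y s ▸ (hℓ (y, s)).1
  obtain rfl : x = v := by
    refine sub_eq_zero.1 (eq_zero_of_forall_dual_le (K := c + α + φ 0) fun s => ?_)
    have := hlow 0 s
    simp only [map_zero, zero_add] at this
    rw [map_sub]
    linarith
  refine ⟨p - r, ?_⟩
  have hL : L (x, r) ≤ ((-c : ℝ) : EReal) := by
    rw [← hself]
    refine iSup_le fun ⟨y, s⟩ => EReal.coe_sub_le_coe_iff.2 ?_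
    simpa [hrv, sub_neg_eq_add] using (hℓ (y, s)).2
  have hφ : FnConj φ (p - r) ≤ ((c + α : ℝ) : EReal) := by
    refine iSup_le fun y => EReal.coe_le_coe_iff.2 ?_
    have := hlow y 0
    simp only [zero_apply, add_zero] at this
    rw [sub_apply]
    linarith
  calc L (x, p - (p - r)) + FnConj φ (p - r) ≤ ((-c : ℝ) : EReal) + ((c + α : ℝ) : EReal) := by
        rw [sub_sub_cancel]; exact add_le_add hL hφ
    _ = α := by norm_cast; ring

lemma fnConj_ne_bot (φ : X → ℝ) (r : StrongDual ℝ X) : FnConj φ r ≠ ⊥ :=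
  ne_bot_of_le_ne_bot (EReal.coe_ne_bot _) (le_fnConj φ r 0)

section InfConvolution

variable {L : X × StrongDual ℝ X → EReal} {φ : X → ℝ}

lemma apply_le_iInf_add_fnConj (hbot : ∀ z, L z ≠ ⊥) (hself : ∀ x p, LagConj L p x = L (x, p))
    (x : X) (p : StrongDual ℝ X) :
    ((p x : ℝ) : EReal) ≤ ⨅ r, L (x, p - r) + φ x + FnConj φ r := by
  refine le_iInf fun r => ?_
  calc ((p x : ℝ) : EReal) = (((p - r) x : ℝ) : EReal) + φ x + ((r x - φ x : ℝ) : EReal) := by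
        norm_cast; simp
    _ ≤ L (x, p - r) + φ x + FnConj φ r := by
        gcongr
        · exact apply_le_of_lagConj_eq hbot hself x (p - r)
        · exact le_fnConj φ r x

lemma apply_add_apply_le_iInf_add_iInf (hbot : ∀ z, L z ≠ ⊥)
    (hself : ∀ x p, LagConj L p x = L (x, p)) (x y : X) (p q : StrongDual ℝ X) :
    ((p y + q x : ℝ) : EReal) ≤
      (⨅ r, L (x, p - r) + φ x + FnConj φ r) + ⨅ r, L (y, q - r) + φ y + FnConj φ r := by
  have hne_bot : ∀ x p, ⨅ r, L (x, p - r) + φ x + FnConj φ r ≠ ⊥ := fun x p =>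
    ne_bot_of_le_ne_bot (EReal.coe_ne_bot _) (apply_le_iInf_add_fnConj hbot hself x p)
  refine EReal.le_iInf_add_iInf (hne_bot x p) (hne_bot y q) fun r r' => ?_
  calc ((p y + q x : ℝ) : EReal)
      = (((p - r) y + (q - r') x : ℝ) : EReal) + (φ x + ((r' x - φ x : ℝ) : EReal))
          + (φ y + ((r y - φ y : ℝ) : EReal)) := by
        norm_cast; simp only [sub_apply]; ring
    _ ≤ (L (x, p - r) + L (y, q - r')) + (φ x + FnConj φ r') + (φ y + FnConj φ r) := by
        gcongr
        · exact apply_add_apply_le_of_lagConj_eq hbot hself x y (p - r) (q - r')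
        · exact le_fnConj φ r' x
        · exact le_fnConj φ r y
    _ = (L (x, p - r) + φ x + FnConj φ r) + (L (y, q - r') + φ y + FnConj φ r') := by
        ac_rfl

lemma iInf_add_fnConj_le_add_lagConj
    (hrefl : Function.Surjective (inclusionInDoubleDual ℝ X)) (hdom : ∃ z, L z ≠ ⊤)
    (hself : ∀ x p, LagConj L p x = L (x, p)) (hφconv : ConvexOn ℝ univ φ)
    (hφcont : Continuous φ) (x : X) (p : StrongDual ℝ X) :
    ⨅ r, L (x, p - r) + φ x + FnConj φ r ≤ φ x + LagConj (fun z => L z + φ z.1) p x := by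
  refine EReal.le_of_forall_lt_iff_le.1 fun β hβ => ?_
  rw [add_comm] at hβ
  have hV : LagConj (fun z => L z + φ z.1) p x ≤ ((β - φ x : ℝ) : EReal) :=
    ((lt_iff_lt_of_le_iff_le (EReal.sub_le_iff_le_add (Or.inl (EReal.coe_ne_bot _))
      (Or.inl (EReal.coe_ne_top _)))).2 hβ).le
  obtain ⟨r, hr⟩ := exists_add_fnConj_le_of_lagConj_add_le hrefl hdom hself hφconv hφcont hV
  calc ⨅ r, L (x, p - r) + φ x + FnConj φ r ≤ L (x, p - r) + FnConj φ r + φ x := by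
        rw [add_right_comm]; exact iInf_le _ r
    _ ≤ ((β - φ x : ℝ) : EReal) + φ x := by gcongr
    _ = β := by norm_cast; ring

lemma iSup_sub_fnConj_add_lagConj_le (hbot : ∀ z, L z ≠ ⊥) {M : X × StrongDual ℝ X → EReal}
    (hM : ∀ y s r, M (y, s + r) ≤ L (y, s) + φ y + FnConj φ r) (x : X) (p : StrongDual ℝ X) :
    (⨆ r : StrongDual ℝ X, (r x : EReal) - FnConj φ r) + LagConj (fun z => L z + φ z.1) p x ≤
      LagConj M p x := by
  refine EReal.iSup_add_iSup_le fun r ⟨y, s⟩ => ?_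
  have hLφ : L (y, s) + φ y ≠ ⊥ := EReal.add_ne_bot_iff.2 ⟨hbot _, EReal.coe_ne_bot _⟩
  calc (r x : EReal) - FnConj φ r + (((p y + s x : ℝ) : EReal) - (L (y, s) + φ y))
      = ((r x + (p y + s x) : ℝ) : EReal) - (FnConj φ r + (L (y, s) + φ y)) :=
        EReal.coe_sub_add_coe_sub _ _ (fnConj_ne_bot φ r) hLφ
    _ ≤ ((p y + (s + r) x : ℝ) : EReal) - M (y, s + r) := by
        refine EReal.sub_le_sub (le_of_eq ?_) ((hM y s r).trans_eq (add_comm _ _))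
        norm_cast; simp only [add_apply]; ring
    _ ≤ LagConj M p x :=
        le_iSup (fun z : X × StrongDual ℝ X => ((p z.1 + z.2 x : ℝ) : EReal) - M z) _

end InfConvolution

end Lagrangian

theorem stmt5_general {X : Type*} [NormedAddCommGroup X] [NormedSpace ℝ X]
    (hrefl : Function.Surjective (NormedSpace.inclusionInDoubleDual ℝ X))
    (L : X × StrongDual ℝ X → EReal)
    (hproper : (∃ z, L z ≠ ⊤) ∧ ∀ z, L z ≠ ⊥)
    (hself : ∀ x p, LagConj L p x = L (x, p))
    (φ : X → ℝ) (hφconv : ConvexOn ℝ Set.univ φ) (hφcont : Continuous φ)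
    (M : X × StrongDual ℝ X → EReal)
    (hM : ∀ x p, M (x, p) = ⨅ r : StrongDual ℝ X, L (x, p - r) + ((φ x : ℝ) : EReal) + FnConj φ r) :
    ∀ x p, LagConj M p x = M (x, p) := by
  obtain ⟨hdom, hbot⟩ := hproper
  have hMbot : ∀ z, M z ≠ ⊥ := fun ⟨x, p⟩ => hM x p ▸
    ne_bot_of_le_ne_bot (EReal.coe_ne_bot _) (apply_le_iInf_add_fnConj hbot hself x p)
  have hMle : ∀ y s r, M (y, s + r) ≤ L (y, s) + φ y + FnConj φ r := fun y s r => by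
    rw [hM]; exact iInf_le_of_le r (by rw [add_sub_cancel_right])
  intro x p
  refine le_antisymm ((lagConj_le_iff_forall_le_add hMbot x p).2 fun y q => ?_) ?_
  · rw [hM, hM]
    exact apply_add_apply_le_iInf_add_iInf hbot hself x y p q
  · calc M (x, p) ≤ φ x + LagConj (fun z => L z + φ z.1) p x :=
          hM x p ▸ iInf_add_fnConj_le_add_lagConj hrefl hdom hself hφconv hφcont x p
      _ ≤ (⨆ r : StrongDual ℝ X, (r x : EReal) - FnConj φ r) +
            LagConj (fun z => L z + φ z.1) p x := by
          gcongr; exact le_iSup_sub_fnConj hφconv hφcont.lowerSemicontinuous x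
      _ ≤ LagConj M p x := iSup_sub_fnConj_add_lagConj_le hbot hMle x p

/-- If `L` is a proper selfdual Lagrangian and `φ` is convex and
continuous on `X`, then `M(x,p) = inf{L(x,p−r) + φ(x) + φ*(r) : r ∈ X*}` is also
a selfdual Lagrangian on `X × X*`. -/
theorem stmt5 {X : Type*} [NormedAddCommGroup X] [NormedSpace ℝ X] [CompleteSpace X]
    (hrefl : Function.Surjective (NormedSpace.inclusionInDoubleDual ℝ X))
    (L : X × StrongDual ℝ X → EReal)
    (hproper : (∃ z, L z ≠ ⊤) ∧ ∀ z, L z ≠ ⊥)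
    (hself : ∀ x p, LagConj L p x = L (x, p))
    (φ : X → ℝ) (hφconv : ConvexOn ℝ Set.univ φ) (hφcont : Continuous φ)
    (M : X × StrongDual ℝ X → EReal)
    (hM : ∀ x p, M (x, p) = ⨅ r : StrongDual ℝ X, L (x, p - r) + ((φ x : ℝ) : EReal) + FnConj φ r) :
    ∀ x p, LagConj M p x = M (x, p) :=
  stmt5_general hrefl L hproper hself φ hφconv hφcont M hM
end

section
/- If L₁ and L₂ are selfdual Lagrangians on X × X* and Y × Y* respectively, and A : X → Y* is a bounded linear operator, then the Lagrangian on (X × Y) × (X* × Y*) given by L((x,y),(p,q)) = L₁(x, A*y + p) + L₂(y, −Ax + q) is selfdual. -/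
open NormedSpace

/-- Legendre transform in both variables of a Lagrangian on
`(X × Y) × (X* × Y*)`, with the product duality pairing. -/
noncomputable def LagConj2 {X Y : Type*} [NormedAddCommGroup X] [NormedSpace ℝ X]
    [NormedAddCommGroup Y] [NormedSpace ℝ Y]
    (L : (X × Y) × (StrongDual ℝ X × StrongDual ℝ Y) → EReal)
    (P : StrongDual ℝ X × StrongDual ℝ Y) (U : X × Y) : EReal :=
  ⨆ z : (X × Y) × (StrongDual ℝ X × StrongDual ℝ Y),
    ((P.1 z.1.1 + P.2 z.1.2 + z.2.1 U.1 + z.2.2 U.2 : ℝ) : EReal) - L z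

/-!
Substituting `p ↦ p - A* y`, `q ↦ q + A x` in the supremum defining the Legendre transform of `L`
turns `L` into the decoupled Lagrangian `L₁(x, p) + L₂(y, q)` and, because `A*` is the adjoint of
`A`, changes the pairing with `(P, Q)` at `(u, v)` only by replacing `(P, Q)` with
`(A* v + P, -A u + Q)`. The transform of a decoupled Lagrangian is the sum of the transforms, as
the supremum splits over independent variables; splitting `-(L₁ + L₂)` as `-L₁ - L₂` in `EReal`
needs that a selfdual Lagrangian never takes the value `⊥`. Selfduality of `L₁` and `L₂` then
gives `L₁(u, A* v + P) + L₂(v, -A u + Q) = L((u, v), (P, Q))`.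
-/

namespace EReal

lemma iSup_add_iSup {ι κ : Type*} (f : ι → EReal) (g : κ → EReal) :
    (⨆ i, f i) + (⨆ j, g j) = ⨆ p : ι × κ, f p.1 + g p.2 := by
  refine le_antisymm (add_le_of_forall_lt fun a ha b hb => ?_)
    (iSup_le fun p => add_le_add (le_iSup f p.1) (le_iSup g p.2))
  obtain ⟨i, hi⟩ := lt_iSup_iff.mp ha
  obtain ⟨j, hj⟩ := lt_iSup_iff.mp hb
  exact (add_le_add hi.le hj.le).trans (le_iSup (fun p : ι × κ => f p.1 + g p.2) (i, j))

end EReal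

section Lagrangian

variable {X Y : Type*} [NormedAddCommGroup X] [NormedSpace ℝ X]
  [NormedAddCommGroup Y] [NormedSpace ℝ Y]

def IsSelfdual (L : X × StrongDual ℝ X → EReal) : Prop :=
  ∀ x p, LagConj L p x = L (x, p)

lemma IsSelfdual.ne_bot {L : X × StrongDual ℝ X → EReal} (hL : IsSelfdual L) (z) : L z ≠ ⊥ := by
  obtain ⟨x, p⟩ := z
  intro hbot
  have hle : (((p x + p x : ℝ) : EReal) - L (x, p)) ≤ LagConj L p x :=
    le_iSup (fun yq : X × StrongDual ℝ X => ((p yq.1 + yq.2 x : ℝ) : EReal) - L yq) (x, p)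
  rw [hL x p, hbot, EReal.coe_sub_bot] at hle
  exact bot_ne_top (top_le_iff.mp hle)

noncomputable def lagSum (L₁ : X × StrongDual ℝ X → EReal) (L₂ : Y × StrongDual ℝ Y → EReal) :
    (X × Y) × (StrongDual ℝ X × StrongDual ℝ Y) → EReal :=
  fun z => L₁ (z.1.1, z.2.1) + L₂ (z.1.2, z.2.2)

lemma LagConj2_lagSum {L₁ : X × StrongDual ℝ X → EReal} {L₂ : Y × StrongDual ℝ Y → EReal}
    (h₁ : ∀ z, L₁ z ≠ ⊥) (h₂ : ∀ z, L₂ z ≠ ⊥) (P : StrongDual ℝ X × StrongDual ℝ Y) (U : X × Y) :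
    LagConj2 (lagSum L₁ L₂) P U = LagConj L₁ P.1 U.1 + LagConj L₂ P.2 U.2 := by
  rw [LagConj, LagConj, EReal.iSup_add_iSup, LagConj2,
    ← (Equiv.prodProdProdComm X (StrongDual ℝ X) Y (StrongDual ℝ Y)).iSup_comp]
  refine iSup_congr fun w => ?_
  rw [← EReal.add_sub_add_comm (Or.inl (h₁ _)) (Or.inr (h₂ _)), ← EReal.coe_add]
  simp only [lagSum, Equiv.prodProdProdComm_apply]
  congr 2
  ring

lemma LagConj2_of_eq_shear (M L : (X × Y) × (StrongDual ℝ X × StrongDual ℝ Y) → EReal)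
    (A : X → StrongDual ℝ Y) (Astar : Y → StrongDual ℝ X)
    (hAstar : ∀ x y, Astar y x = A x y)
    (hL : ∀ x y p q, L ((x, y), (p, q)) = M ((x, y), (Astar y + p, -A x + q)))
    (P : StrongDual ℝ X × StrongDual ℝ Y) (U : X × Y) :
    LagConj2 L P U = LagConj2 M (Astar U.2 + P.1, -A U.1 + P.2) U := by
  let shear :
      (X × Y) × (StrongDual ℝ X × StrongDual ℝ Y) ≃ (X × Y) × (StrongDual ℝ X × StrongDual ℝ Y) :=
    (Equiv.refl _).prodShear fun xy => Equiv.addLeft (-Astar xy.2, A xy.1)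
  rw [LagConj2, LagConj2, ← shear.iSup_comp]
  refine iSup_congr fun ⟨⟨x, y⟩, ⟨p, q⟩⟩ => ?_
  simp only [shear, Equiv.prodShear_apply, Equiv.coe_refl, id,
    Equiv.coe_addLeft, Prod.mk_add_mk, hL, add_neg_cancel_left, neg_add_cancel_left]
  congr 2
  simp only [add_apply, neg_apply, hAstar]
  ring

end Lagrangian

theorem stmt16_general {X Y : Type*} [NormedAddCommGroup X] [NormedSpace ℝ X]
    [NormedAddCommGroup Y] [NormedSpace ℝ Y]
    (L₁ : X × StrongDual ℝ X → EReal) (L₂ : Y × StrongDual ℝ Y → EReal)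
    (hself₁ : ∀ x p, LagConj L₁ p x = L₁ (x, p))
    (hself₂ : ∀ y q, LagConj L₂ q y = L₂ (y, q))
    (A : X →L[ℝ] StrongDual ℝ Y) (Astar : Y →L[ℝ] StrongDual ℝ X)
    (hAstar : ∀ (x : X) (y : Y), Astar y x = A x y)
    (L : (X × Y) × (StrongDual ℝ X × StrongDual ℝ Y) → EReal)
    (hL : ∀ (x : X) (y : Y) (p : StrongDual ℝ X) (q : StrongDual ℝ Y),
      L ((x, y), (p, q)) = L₁ (x, Astar y + p) + L₂ (y, -A x + q)) :
    ∀ (U : X × Y) (P : StrongDual ℝ X × StrongDual ℝ Y), LagConj2 L P U = L (U, P) := by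
  rintro ⟨u, v⟩ ⟨p, q⟩
  rw [LagConj2_of_eq_shear (lagSum L₁ L₂) L A Astar hAstar hL,
    LagConj2_lagSum (IsSelfdual.ne_bot hself₁) (IsSelfdual.ne_bot hself₂), hself₁, hself₂, hL]

/-- If `L₁, L₂` are selfdual on `X × X*` and `Y × Y*` and
`A : X → Y*` is bounded linear, then
`L((x,y),(p,q)) = L₁(x, A*y + p) + L₂(y, −Ax + q)` is selfdual. -/
theorem stmt16 {X Y : Type*} [NormedAddCommGroup X] [NormedSpace ℝ X] [CompleteSpace X]
    [NormedAddCommGroup Y] [NormedSpace ℝ Y] [CompleteSpace Y]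
    (hreflX : Function.Surjective (NormedSpace.inclusionInDoubleDual ℝ X))
    (hreflY : Function.Surjective (NormedSpace.inclusionInDoubleDual ℝ Y))
    (L₁ : X × StrongDual ℝ X → EReal) (L₂ : Y × StrongDual ℝ Y → EReal)
    (hself₁ : ∀ x p, LagConj L₁ p x = L₁ (x, p))
    (hself₂ : ∀ y q, LagConj L₂ q y = L₂ (y, q))
    (A : X →L[ℝ] StrongDual ℝ Y) (Astar : Y →L[ℝ] StrongDual ℝ X)
    (hAstar : ∀ (x : X) (y : Y), Astar y x = A x y)
    (L : (X × Y) × (StrongDual ℝ X × StrongDual ℝ Y) → EReal)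
    (hL : ∀ (x : X) (y : Y) (p : StrongDual ℝ X) (q : StrongDual ℝ Y),
      L ((x, y), (p, q)) = L₁ (x, Astar y + p) + L₂ (y, -A x + q)) :
    ∀ (U : X × Y) (P : StrongDual ℝ X × StrongDual ℝ Y), LagConj2 L P U = L (U, P) :=
  stmt16_general L₁ L₂ hself₁ hself₂ A Astar hAstar L hL
end
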